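/- Let L be an e-cyclic residuated lattice satisfying the left prelinearity law, and let H be a convex subalgebra of L. Then the following are equivalent: (1) H is prime; (2) for all a, b ∈ L, |a| ∨ |b| ∈ H implies a ∈ H or b ∈ H; (3) for all a, b ∈ L, |a| ∨ |b| = e implies a ∈ H or b ∈ H; (4) for all a, b ∈ L, (a\b) ∧ e ∈ H or (b\a) ∧ e ∈ H; (5) the set of convex subalgebras of L containing H is totally ordered by set-inclusion. -/

import Mathlib

universe u

/-- A residuated lattice: a lattice-ordered monoid with left and right residuals.
`ldiv x z` is `x \ z` and `rdiv z y` is `z / y`. -/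
class ResiduatedLattice (α : Type u) extends Lattice α, Monoid α where
  ldiv : α → α → α
  rdiv : α → α → α
  mul_le_iff_le_ldiv : ∀ x y z : α, x * y ≤ z ↔ y ≤ ldiv x z
  mul_le_iff_le_rdiv : ∀ x y z : α, x * y ≤ z ↔ x ≤ rdiv z y

namespace ResiduatedLattice

variable {α : Type u} [ResiduatedLattice α]

/-- `L` is e-cyclic if `x \ e = e / x` for all `x`. -/
def ECyclic (α : Type u) [ResiduatedLattice α] : Prop :=
  ∀ x : α, ldiv x 1 = rdiv 1 x

/-- Absolute value: `|x| = x ⊓ (e / x) ⊓ e`. -/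
def absv (x : α) : α := x ⊓ rdiv 1 x ⊓ 1

/-- A convex subalgebra: contains `e`, closed under all the operations, and order-convex. -/
structure IsConvexSubalgebra (H : Set α) : Prop where
  one_mem : (1 : α) ∈ H
  mul_mem : ∀ ⦃x⦄, x ∈ H → ∀ ⦃y⦄, y ∈ H → x * y ∈ H
  sup_mem : ∀ ⦃x⦄, x ∈ H → ∀ ⦃y⦄, y ∈ H → x ⊔ y ∈ H
  inf_mem : ∀ ⦃x⦄, x ∈ H → ∀ ⦃y⦄, y ∈ H → x ⊓ y ∈ H
  ldiv_mem : ∀ ⦃x⦄, x ∈ H → ∀ ⦃y⦄, y ∈ H → ldiv x y ∈ H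
  rdiv_mem : ∀ ⦃x⦄, x ∈ H → ∀ ⦃y⦄, y ∈ H → rdiv x y ∈ H
  convex : ∀ ⦃a⦄, a ∈ H → ∀ ⦃b⦄, b ∈ H → ∀ ⦃x⦄, a ≤ x → x ≤ b → x ∈ H

/-- `C[S]`: the smallest convex subalgebra containing `S`. -/
def convexClosure (S : Set α) : Set α :=
  ⋂₀ {H : Set α | IsConvexSubalgebra H ∧ S ⊆ H}

end ResiduatedLattice

/-!
A convex subalgebra contains `x` iff it contains the negative element `|x|`, and a
down-directed set `S` of negative elements generates the convex subalgebra of all `x` with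
`w ^ n ≤ |x|` for some `w ∈ S` and `n`: a common lower bound `r` of `|x|` and `|y|` gives
`r * r ≤ |x ∘ y|` for each operation `∘` (for the residuals this needs e-cyclicity).

By left prelinearity, `u = (a\b) ∧ e` and `v = (b\a) ∧ e` satisfy `u ∨ v = e`, hence
`u ^ n ∨ v ^ m = e`; so the subalgebras generated by `u` and by `v` meet only in elements of
absolute value `e`, and a prime `H` contains `u` or `v`. If `u` lies in the subalgebra
generated by `H` and `v`, then `g ^ n ≤ u` for some negative `g ∈ H`, since
`g = g u ∨ g v ≤ u ∨ (g ∧ v)`; hence if the subalgebras above `H` form a chain, again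
`u ∈ H` or `v ∈ H`. Conversely, `|x| ∈ K` and `(|x|\|y|) ∧ e ∈ K` force `y ∈ K`,
because `|x| ((|x|\|y|) ∧ e) ≤ |y| ≤ e`.
-/

namespace ResiduatedLattice

variable {α : Type u} [ResiduatedLattice α]

section Arithmetic

theorem le_ldiv_iff {x y z : α} : y ≤ ldiv x z ↔ x * y ≤ z := (mul_le_iff_le_ldiv x y z).symm

theorem le_rdiv_iff {x y z : α} : x ≤ rdiv z y ↔ x * y ≤ z := (mul_le_iff_le_rdiv x y z).symm

theorem mul_ldiv_le (x z : α) : x * ldiv x z ≤ z := le_ldiv_iff.1 le_rfl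

theorem rdiv_mul_le (z y : α) : rdiv z y * y ≤ z := le_rdiv_iff.1 le_rfl

instance : MulLeftMono α :=
  ⟨fun _ _ _ h => le_ldiv_iff.1 (h.trans (le_ldiv_iff.2 le_rfl))⟩

instance : MulRightMono α :=
  ⟨fun _ _ _ h => le_rdiv_iff.1 (h.trans (le_rdiv_iff.2 le_rfl))⟩

theorem mul_sup_distrib (a b c : α) : a * (b ⊔ c) = a * b ⊔ a * c :=
  le_antisymm
    (le_ldiv_iff.1 (sup_le (le_ldiv_iff.2 le_sup_left) (le_ldiv_iff.2 le_sup_right)))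
    (sup_le (mul_le_mul_right le_sup_left a) (mul_le_mul_right le_sup_right a))

theorem sup_mul_distrib (a b c : α) : (a ⊔ b) * c = a * c ⊔ b * c :=
  le_antisymm
    (le_rdiv_iff.1 (sup_le (le_rdiv_iff.2 le_sup_left) (le_rdiv_iff.2 le_sup_right)))
    (sup_le (mul_le_mul_left le_sup_left c) (mul_le_mul_left le_sup_right c))

theorem pow_sup_le {a b : α} (ha : a ≤ 1) (hb : b ≤ 1) : ∀ n : ℕ, (a ⊔ b) ^ n ≤ a ⊔ b ^ n
  | 0 => by simp
  | n + 1 =>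
    calc (a ⊔ b) ^ (n + 1) ≤ (a ⊔ b ^ n) * (a ⊔ b) := by
          rw [pow_succ]; exact mul_le_mul_left (pow_sup_le ha hb n) _
      _ = (a ⊔ b ^ n) * a ⊔ (a * b ⊔ b ^ n * b) := by
        rw [mul_sup_distrib, sup_mul_distrib a (b ^ n) b]
      _ ≤ a ⊔ b ^ (n + 1) :=
        sup_le (le_sup_of_le_left (mul_le_of_le_one_left' (sup_le ha (pow_le_one' hb n))))
          (sup_le (le_sup_of_le_left (mul_le_of_le_one_right' hb))
            (le_sup_of_le_right (pow_succ b n).ge))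

theorem sup_pow_eq_one {a b : α} (hab : a ⊔ b = 1) (n : ℕ) : a ⊔ b ^ n = 1 := by
  have ha : a ≤ 1 := le_sup_left.trans hab.le
  have hb : b ≤ 1 := le_sup_right.trans hab.le
  refine le_antisymm (sup_le ha (pow_le_one' hb n)) ?_
  calc (1 : α) = (a ⊔ b) ^ n := by rw [hab, one_pow]
    _ ≤ a ⊔ b ^ n := pow_sup_le ha hb n

theorem pow_sup_pow_eq_one {a b : α} (hab : a ⊔ b = 1) (n m : ℕ) : a ^ n ⊔ b ^ m = 1 := by
  rw [sup_comm]
  refine sup_pow_eq_one ?_ n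
  rw [sup_comm, sup_pow_eq_one hab m]

end Arithmetic

section AbsoluteValue

variable {p x y : α}

theorem absv_le_self (x : α) : absv x ≤ x := inf_le_left.trans inf_le_left

theorem absv_le_one (x : α) : absv x ≤ 1 := inf_le_right

theorem le_absv_iff : p ≤ absv x ↔ p ≤ x ∧ p * x ≤ 1 ∧ p ≤ 1 := by
  simp only [absv, le_inf_iff, le_rdiv_iff, and_assoc]

theorem le_absv_iff_of_eCyclic (hec : ECyclic α) :
    p ≤ absv x ↔ p ≤ x ∧ x * p ≤ 1 ∧ p ≤ 1 := by
  simp only [absv, le_inf_iff, ← hec x, le_ldiv_iff, and_assoc]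

theorem absv_of_le_one (hx : x ≤ 1) : absv x = x :=
  le_antisymm (absv_le_self x) (le_absv_iff.2 ⟨le_rfl, mul_le_one' hx hx, hx⟩)

theorem mul_self_le_absv_mul {r : α} (hx : r ≤ absv x) (hy : r ≤ absv y) :
    r * r ≤ absv (x * y) := by
  obtain ⟨hrx, hrx1, hr1⟩ := le_absv_iff.1 hx
  obtain ⟨hry, hry1, -⟩ := le_absv_iff.1 hy
  refine le_absv_iff.2 ⟨mul_le_mul' hrx hry, ?_, mul_le_one' hr1 hr1⟩
  calc r * r * (x * y) = r * (r * x) * y := by simp only [mul_assoc]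
    _ ≤ r * 1 * y := mul_le_mul_left (mul_le_mul_right hrx1 r) y
    _ ≤ 1 := by rwa [mul_one]

theorem mul_self_le_absv_ldiv (hec : ECyclic α) {r : α} (hx : r ≤ absv x) (hy : r ≤ absv y) :
    r * r ≤ absv (ldiv x y) := by
  obtain ⟨hrx, hxr1, hr1⟩ := (le_absv_iff_of_eCyclic hec).1 hx
  obtain ⟨hry, hyr1, -⟩ := (le_absv_iff_of_eCyclic hec).1 hy
  refine (le_absv_iff_of_eCyclic hec).2 ⟨le_ldiv_iff.2 ?_, ?_, mul_le_one' hr1 hr1⟩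
  · calc x * (r * r) = x * r * r := (mul_assoc _ _ _).symm
      _ ≤ y := (mul_le_of_le_one_left' hxr1).trans hry
  · have hdiv : ldiv x y * r ≤ rdiv 1 x := by
      rw [← hec x, le_ldiv_iff, ← mul_assoc]
      exact (mul_le_mul_left (mul_ldiv_le x y) r).trans hyr1
    calc ldiv x y * (r * r) = ldiv x y * r * r := (mul_assoc _ _ _).symm
      _ ≤ rdiv 1 x * x := mul_le_mul' hdiv hrx
      _ ≤ 1 := rdiv_mul_le 1 x

theorem mul_self_le_absv_rdiv (hec : ECyclic α) {r : α} (hx : r ≤ absv x) (hy : r ≤ absv y) :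
    r * r ≤ absv (rdiv x y) := by
  obtain ⟨hrx, hxr1, hr1⟩ := (le_absv_iff_of_eCyclic hec).1 hx
  obtain ⟨hry, -, -⟩ := (le_absv_iff_of_eCyclic hec).1 hy
  obtain ⟨-, hry1, -⟩ := le_absv_iff.1 hy
  refine (le_absv_iff_of_eCyclic hec).2 ⟨le_rdiv_iff.2 ?_, ?_, mul_le_one' hr1 hr1⟩
  · calc r * r * y = r * (r * y) := mul_assoc _ _ _
      _ ≤ x := (mul_le_of_le_one_right' hry1).trans hrx
  · calc rdiv x y * (r * r) = rdiv x y * r * r := (mul_assoc _ _ _).symm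
      _ ≤ x * r := mul_le_mul_left ((mul_le_mul_right hry _).trans (rdiv_mul_le x y)) r
      _ ≤ 1 := hxr1

theorem le_absv_sup {r : α} (hx : r ≤ absv x) (hy : r ≤ absv y) : r ≤ absv (x ⊔ y) := by
  obtain ⟨hrx, hrx1, hr1⟩ := le_absv_iff.1 hx
  obtain ⟨-, hry1, -⟩ := le_absv_iff.1 hy
  exact le_absv_iff.2
    ⟨le_sup_of_le_left hrx, by rw [mul_sup_distrib]; exact sup_le hrx1 hry1, hr1⟩

theorem le_absv_inf {r : α} (hx : r ≤ absv x) (hy : r ≤ absv y) : r ≤ absv (x ⊓ y) := by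
  obtain ⟨hrx, hrx1, hr1⟩ := le_absv_iff.1 hx
  exact le_absv_iff.2
    ⟨le_inf hrx (le_absv_iff.1 hy).1, (mul_le_mul_right inf_le_left r).trans hrx1, hr1⟩

theorem le_absv_of_le_of_le {r a b : α} (ha : r ≤ absv a) (hb : r ≤ absv b) (hax : a ≤ x)
    (hxb : x ≤ b) : r ≤ absv x := by
  obtain ⟨hra, -, hr1⟩ := le_absv_iff.1 ha
  exact le_absv_iff.2
    ⟨hra.trans hax, (mul_le_mul_right hxb r).trans (le_absv_iff.1 hb).2.1, hr1⟩

end AbsoluteValue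

namespace IsConvexSubalgebra

variable {K : Set α} {x : α}

theorem mem_of_le_of_le_one (hK : IsConvexSubalgebra K) {a : α} (ha : a ∈ K) (hax : a ≤ x)
    (hx : x ≤ 1) : x ∈ K :=
  hK.convex ha hK.one_mem hax hx

theorem pow_mem (hK : IsConvexSubalgebra K) (hx : x ∈ K) : ∀ n : ℕ, x ^ n ∈ K
  | 0 => by simpa using hK.one_mem
  | n + 1 => by rw [pow_succ]; exact hK.mul_mem (hK.pow_mem hx n) hx

theorem absv_mem (hK : IsConvexSubalgebra K) (hx : x ∈ K) : absv x ∈ K :=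
  hK.inf_mem (hK.inf_mem hx (hK.rdiv_mem hK.one_mem hx)) hK.one_mem

theorem absv_mem_iff (hK : IsConvexSubalgebra K) : absv x ∈ K ↔ x ∈ K :=
  ⟨fun h => hK.convex h (hK.ldiv_mem h hK.one_mem) (absv_le_self x)
    (le_ldiv_iff.2 (le_absv_iff.1 le_rfl).2.1), hK.absv_mem⟩

theorem mem_of_ldiv_inf_one_mem (hK : IsConvexSubalgebra K) {s y : α} (hs : s ∈ K)
    (hsxy : s ≤ absv x ⊔ absv y) (hxy : ldiv (absv x) (absv y) ⊓ 1 ∈ K) : y ∈ K := by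
  have hle : s * (ldiv (absv x) (absv y) ⊓ 1) ≤ absv y :=
    calc s * (ldiv (absv x) (absv y) ⊓ 1)
        ≤ absv x * (ldiv (absv x) (absv y) ⊓ 1) ⊔ absv y * (ldiv (absv x) (absv y) ⊓ 1) := by
          rw [← sup_mul_distrib]; exact mul_le_mul_left hsxy _
      _ ≤ absv y := sup_le ((mul_le_mul_right inf_le_left _).trans (mul_ldiv_le _ _))
          (mul_le_of_le_one_right' inf_le_right)
  exact hK.absv_mem_iff.1 (hK.mem_of_le_of_le_one (hK.mul_mem hs hxy) hle (absv_le_one y))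

end IsConvexSubalgebra

section PowerHull

def powerHull (S : Set α) : Set α := {x | ∃ w ∈ S, ∃ n : ℕ, w ^ n ≤ absv x}

variable {S : Set α}

theorem mem_powerHull_of_mem {w : α} (hw : w ∈ S) (hw1 : w ≤ 1) : w ∈ powerHull S :=
  ⟨w, hw, 1, by rw [pow_one, absv_of_le_one hw1]⟩

theorem exists_pow_le_absv_of_mem_powerHull (hS : ∀ w ∈ S, w ≤ 1)
    (hdir : DirectedOn (· ≥ ·) S) {x y : α} (hx : x ∈ powerHull S) (hy : y ∈ powerHull S) :
    ∃ w ∈ S, ∃ n : ℕ, w ^ n ≤ absv x ∧ w ^ n ≤ absv y := by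
  obtain ⟨w₁, hw₁, n₁, hx⟩ := hx
  obtain ⟨w₂, hw₂, n₂, hy⟩ := hy
  obtain ⟨w, hw, hww₁, hww₂⟩ := hdir w₁ hw₁ w₂ hw₂
  refine ⟨w, hw, n₁ + n₂, ?_, ?_⟩
  · exact (pow_le_pow_right_of_le_one' (hS w hw) (Nat.le_add_right n₁ n₂)).trans
      ((pow_le_pow_left' hww₁ n₁).trans hx)
  · exact (pow_le_pow_right_of_le_one' (hS w hw) (Nat.le_add_left n₂ n₁)).trans
      ((pow_le_pow_left' hww₂ n₂).trans hy)

theorem isConvexSubalgebra_powerHull (hec : ECyclic α) (hS : ∀ w ∈ S, w ≤ 1)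
    (hdir : DirectedOn (· ≥ ·) S) (hne : S.Nonempty) : IsConvexSubalgebra (powerHull S) := by
  have bound {x y : α} (hx : x ∈ powerHull S) (hy : y ∈ powerHull S) :=
    exists_pow_le_absv_of_mem_powerHull hS hdir hx hy
  refine
    { one_mem := ?_, mul_mem := ?_, sup_mem := ?_, inf_mem := ?_, ldiv_mem := ?_,
      rdiv_mem := ?_, convex := ?_ }
  · obtain ⟨w, hw⟩ := hne
    exact ⟨w, hw, 0, by rw [pow_zero, absv_of_le_one le_rfl]⟩
  · intro x hx y hy
    obtain ⟨w, hw, n, hnx, hny⟩ := bound hx hy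
    exact ⟨w, hw, n + n, by rw [pow_add]; exact mul_self_le_absv_mul hnx hny⟩
  · intro x hx y hy
    obtain ⟨w, hw, n, hnx, hny⟩ := bound hx hy
    exact ⟨w, hw, n, le_absv_sup hnx hny⟩
  · intro x hx y hy
    obtain ⟨w, hw, n, hnx, hny⟩ := bound hx hy
    exact ⟨w, hw, n, le_absv_inf hnx hny⟩
  · intro x hx y hy
    obtain ⟨w, hw, n, hnx, hny⟩ := bound hx hy
    exact ⟨w, hw, n + n, by rw [pow_add]; exact mul_self_le_absv_ldiv hec hnx hny⟩
  · intro x hx y hy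
    obtain ⟨w, hw, n, hnx, hny⟩ := bound hx hy
    exact ⟨w, hw, n + n, by rw [pow_add]; exact mul_self_le_absv_rdiv hec hnx hny⟩
  · intro a ha b hb x hax hxb
    obtain ⟨w, hw, n, hna, hnb⟩ := bound ha hb
    exact ⟨w, hw, n, le_absv_of_le_of_le hna hnb hax hxb⟩

end PowerHull

section Adjoin

-- For a convex subalgebra `H` and `u ≤ 1`, the convex subalgebra generated by `H ∪ {u}`.
def adjoin (H : Set α) (u : α) : Set α := powerHull ((· ⊓ u) '' {h | h ∈ H ∧ h ≤ 1})

variable {H : Set α} {u v : α}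

theorem isConvexSubalgebra_adjoin (hec : ECyclic α) (hH : IsConvexSubalgebra H) (hu : u ≤ 1) :
    IsConvexSubalgebra (adjoin H u) := by
  refine isConvexSubalgebra_powerHull hec ?_ ?_ ⟨1 ⊓ u, 1, ⟨hH.one_mem, le_rfl⟩, rfl⟩
  · rintro _ ⟨g, -, rfl⟩
    exact inf_le_right.trans hu
  · rintro _ ⟨g₁, ⟨hg₁, hg₁1⟩, rfl⟩ _ ⟨g₂, ⟨hg₂, -⟩, rfl⟩
    exact ⟨g₁ ⊓ g₂ ⊓ u, ⟨g₁ ⊓ g₂, ⟨hH.inf_mem hg₁ hg₂, inf_le_of_left_le hg₁1⟩, rfl⟩,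
      inf_le_inf_right u inf_le_left, inf_le_inf_right u inf_le_right⟩

theorem subset_adjoin (hH : IsConvexSubalgebra H) (u : α) : H ⊆ adjoin H u := fun g hg =>
  ⟨absv g ⊓ u, ⟨absv g, ⟨hH.absv_mem hg, absv_le_one g⟩, rfl⟩, 1, by
    rw [pow_one]; exact inf_le_left⟩

theorem mem_adjoin_self (hH : IsConvexSubalgebra H) (hu : u ≤ 1) : u ∈ adjoin H u :=
  mem_powerHull_of_mem ⟨1, ⟨hH.one_mem, le_rfl⟩, inf_eq_right.2 hu⟩ hu

theorem mem_of_mem_adjoin (hH : IsConvexSubalgebra H) (hu : u ≤ 1) (huv : u ⊔ v = 1)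
    (hmem : u ∈ adjoin H v) : u ∈ H := by
  obtain ⟨_, ⟨g, ⟨hg, hg1⟩, rfl⟩, n, hn⟩ := hmem
  rw [absv_of_le_one hu] at hn
  have hv : v ≤ 1 := le_sup_right.trans huv.le
  have hsplit : g ≤ u ⊔ g ⊓ v :=
    calc g = g * u ⊔ g * v := by rw [← mul_sup_distrib, huv, mul_one]
      _ ≤ u ⊔ g ⊓ v := sup_le_sup (mul_le_of_le_one_left' hg1)
          (le_inf (mul_le_of_le_one_right' hv) (mul_le_of_le_one_left' hg1))
  have hpow : g ^ n ≤ u := (pow_le_pow_left' hsplit n).trans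
    ((pow_sup_le hu (inf_le_right.trans hv) n).trans (sup_le le_rfl hn))
  exact hH.mem_of_le_of_le_one (hH.pow_mem hg n) hpow hu

end Adjoin

section Prime

variable {H : Set α}

variable {u v : α}

theorem mem_or_mem_of_prime (hec : ECyclic α) (hH : IsConvexSubalgebra H)
    (hprime : ∀ X Y : Set α, IsConvexSubalgebra X → IsConvexSubalgebra Y →
      X ∩ Y ⊆ H → X ⊆ H ∨ Y ⊆ H) (huv : u ⊔ v = 1) : u ∈ H ∨ v ∈ H := by
  have hu : u ≤ 1 := le_sup_left.trans huv.le
  have hv : v ≤ 1 := le_sup_right.trans huv.le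
  have hconv {w : α} (hw : w ≤ 1) : IsConvexSubalgebra (powerHull {w}) :=
    isConvexSubalgebra_powerHull hec (by simpa using hw) (directedOn_singleton w)
      (Set.singleton_nonempty w)
  have hmeet : powerHull {u} ∩ powerHull {v} ⊆ H := by
    rintro x ⟨⟨_, rfl, n, hn⟩, ⟨_, rfl, m, hm⟩⟩
    have hx : absv x = 1 := le_antisymm (absv_le_one x)
      ((pow_sup_pow_eq_one huv n m).ge.trans (sup_le hn hm))
    exact hH.absv_mem_iff.1 (hx ▸ hH.one_mem)
  exact (hprime _ _ (hconv hu) (hconv hv) hmeet).imp (· (mem_powerHull_of_mem rfl hu))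
    (· (mem_powerHull_of_mem rfl hv))

theorem mem_or_mem_of_isChain (hec : ECyclic α) (hH : IsConvexSubalgebra H)
    (hchain : IsChain (· ⊆ ·) {K : Set α | IsConvexSubalgebra K ∧ H ⊆ K}) (huv : u ⊔ v = 1) :
    u ∈ H ∨ v ∈ H := by
  have hu : u ≤ 1 := le_sup_left.trans huv.le
  have hv : v ≤ 1 := le_sup_right.trans huv.le
  have hmem {w : α} (hw : w ≤ 1) : adjoin H w ∈ {K : Set α | IsConvexSubalgebra K ∧ H ⊆ K} :=
    ⟨isConvexSubalgebra_adjoin hec hH hw, subset_adjoin hH w⟩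
  rcases hchain.total (hmem hu) (hmem hv) with h | h
  · exact Or.inl (mem_of_mem_adjoin hH hu huv (h (mem_adjoin_self hH hu)))
  · exact Or.inr (mem_of_mem_adjoin hH hv (sup_comm u v ▸ huv) (h (mem_adjoin_self hH hv)))

theorem isChain_of_ldiv_inf_one_mem (h4 : ∀ a b : α, ldiv a b ⊓ 1 ∈ H ∨ ldiv b a ⊓ 1 ∈ H) :
    IsChain (· ⊆ ·) {K : Set α | IsConvexSubalgebra K ∧ H ⊆ K} := by
  rintro X ⟨hX, hHX⟩ Y ⟨hY, hHY⟩ -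
  by_contra! hc
  obtain ⟨x, hxX, hxY⟩ := Set.not_subset.1 hc.1
  obtain ⟨y, hyY, hyX⟩ := Set.not_subset.1 hc.2
  rcases h4 (absv x) (absv y) with h | h
  · exact hyX (hX.mem_of_ldiv_inf_one_mem (hX.absv_mem hxX) le_sup_left (hHX h))
  · exact hxY (hY.mem_of_ldiv_inf_one_mem (hY.absv_mem hyY) le_sup_left (hHY h))

theorem subset_or_subset_of_inter_subset
    (h2 : ∀ a b : α, absv a ⊔ absv b ∈ H → a ∈ H ∨ b ∈ H) {X Y : Set α}
    (hX : IsConvexSubalgebra X) (hY : IsConvexSubalgebra Y) (hXY : X ∩ Y ⊆ H) :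
    X ⊆ H ∨ Y ⊆ H := by
  by_contra! hc
  obtain ⟨x, hxX, hxH⟩ := Set.not_subset.1 hc.1
  obtain ⟨y, hyY, hyH⟩ := Set.not_subset.1 hc.2
  have hle : absv x ⊔ absv y ≤ 1 := sup_le (absv_le_one x) (absv_le_one y)
  have hxy : absv x ⊔ absv y ∈ H :=
    hXY ⟨hX.mem_of_le_of_le_one (hX.absv_mem hxX) le_sup_left hle,
      hY.mem_of_le_of_le_one (hY.absv_mem hyY) le_sup_right hle⟩
  exact (h2 x y hxy).elim hxH hyH

end Prime

end ResiduatedLattice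

open ResiduatedLattice

/-- characterizations of prime convex subalgebras under left prelinearity. -/
theorem stmt8 {α : Type u} [ResiduatedLattice α] (hec : ECyclic α)
    (hpre : ∀ x y : α, (ldiv x y ⊓ 1) ⊔ (ldiv y x ⊓ 1) = 1)
    (H : Set α) (hH : IsConvexSubalgebra H) :
    List.TFAE [
      (∀ X Y : Set α, IsConvexSubalgebra X → IsConvexSubalgebra Y →
        X ∩ Y ⊆ H → X ⊆ H ∨ Y ⊆ H),
      (∀ a b : α, absv a ⊔ absv b ∈ H → a ∈ H ∨ b ∈ H),
      (∀ a b : α, absv a ⊔ absv b = 1 → a ∈ H ∨ b ∈ H),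
      (∀ a b : α, ldiv a b ⊓ 1 ∈ H ∨ ldiv b a ⊓ 1 ∈ H),
      IsChain (· ⊆ ·) {K : Set α | IsConvexSubalgebra K ∧ H ⊆ K}] := by
  tfae_have 1 → 4 := fun h1 a b => mem_or_mem_of_prime hec hH h1 (hpre a b)
  tfae_have 4 → 2 := fun h4 a b hab =>
    (h4 (absv a) (absv b)).symm.imp (hH.mem_of_ldiv_inf_one_mem hab (sup_comm _ _).le)
      (hH.mem_of_ldiv_inf_one_mem hab le_rfl)
  tfae_have 2 → 3 := fun h2 a b hab => h2 a b (hab ▸ hH.one_mem)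
  tfae_have 3 → 4 := fun h3 a b => h3 _ _ (by
    rw [absv_of_le_one inf_le_right, absv_of_le_one inf_le_right, hpre])
  tfae_have 2 → 1 := fun h2 _ _ => subset_or_subset_of_inter_subset h2
  tfae_have 4 → 5 := isChain_of_ldiv_inf_one_mem
  tfae_have 5 → 4 := fun h5 a b => mem_or_mem_of_isChain hec hH h5 (hpre a b)
  tfae_finish
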